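/- Let α ∈ [1,2), ℓ > 0, λ > 0, ν = (α-1)/(2-α), and let Φ₋(x) = x^{(1-α)/2}·J_{-ν}((2/(2-α))·√λ·x^{(2-α)/2}) on (0,ℓ), where ν ∉ ℕ. Then Φ₋ ∉ H¹_α(0,ℓ), i.e. x^{α/2}·Φ₋'(x) is not in L²(0,ℓ). -/

import Mathlib

/-- The Bessel function of the first kind of order `ν`, defined by its series
for positive arguments (using real powers). -/
noncomputable def besselJ (ν x : ℝ) : ℝ :=
  ∑' m : ℕ, ((-1 : ℝ) ^ m / (m.factorial * Real.Gamma ((m : ℝ) + ν + 1))) *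
    (x / 2) ^ (2 * (m : ℝ) + ν)

/-!
Write `C = √λ / (2 - α)`. For `t > 0` the series of `J_{-ν}` factors as
`Φ₋(t) = t^{1-α} g(t^{2-α})`, where `g(z) = C^{-ν} ∑ c_m (C² z)^m` is an entire power series with
`g 0 = C^{-ν} / Γ(1 - ν) ≠ 0` because `ν ∉ ℕ`. Differentiating gives
`(x^{α/2} Φ₋'(x))² = x^{-α} ((1-α) g(x^{2-α}) + (2-α) x^{2-α} g'(x^{2-α}))²`, and the bracket tends
to `(1-α) g 0 ≠ 0` as `x → 0⁺` (note `α ≠ 1`, since `ν ≠ 0`). So the integrand is bounded below by a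
positive multiple of `x^{-α}`, which is not integrable at `0` as `α ≥ 1`.
-/

open Real MeasureTheory Filter Set Topology FormalMultilinearSeries

noncomputable def besselCoeff (μ : ℝ) (m : ℕ) : ℝ :=
  (-1) ^ m / (m.factorial * Gamma (m + μ + 1))

noncomputable def besselSeries (μ : ℝ) : ℝ → ℝ :=
  ofScalarsSum (besselCoeff μ)

lemma besselCoeff_ne_zero {μ : ℝ} {m : ℕ} (h : 0 < m + μ + 1) : besselCoeff μ m ≠ 0 := by
  unfold besselCoeff
  have := Gamma_pos_of_pos h
  positivity

lemma besselCoeff_succ {μ : ℝ} {m : ℕ} (h : 0 < m + μ + 1) :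
    besselCoeff μ (m + 1) = -besselCoeff μ m / ((m + 1) * (m + μ + 1)) := by
  have hΓ : Gamma ((m + 1 : ℕ) + μ + 1) = (m + μ + 1) * Gamma (m + μ + 1) := by
    rw [← Gamma_add_one h.ne']; push_cast; ring_nf
  have := (Gamma_pos_of_pos h).ne'
  simp only [besselCoeff, hΓ, Nat.factorial_succ, pow_succ]
  push_cast
  field_simp

lemma radius_ofScalars_besselCoeff (μ : ℝ) : (ofScalars ℝ (besselCoeff μ)).radius = ⊤ := by
  have hpos : ∀ᶠ m : ℕ in atTop, 0 < m + μ + 1 :=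
    tendsto_natCast_atTop_atTop.eventually (eventually_gt_atTop (-μ - 1)) |>.mono
      fun m hm => by linarith
  refine ofScalars_radius_eq_top_of_tendsto _ _ (hpos.mono fun m => besselCoeff_ne_zero) ?_
  have hshift (a : ℝ) : Tendsto (fun m : ℕ => (m : ℝ) + a) atTop atTop :=
    tendsto_atTop_add_const_right _ a tendsto_natCast_atTop_atTop
  have hratio : Tendsto (fun m : ℕ => ((m + 1) * |m + μ + 1|)⁻¹) atTop (𝓝 0) := by
    simp_rw [add_assoc]
    exact tendsto_inv_atTop_zero.comp
      ((hshift 1).atTop_mul_atTop₀ (tendsto_abs_atTop_atTop.comp (hshift _)))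
  refine hratio.congr' (hpos.mono fun m hm => ?_)
  have := besselCoeff_ne_zero hm
  dsimp only
  rw [besselCoeff_succ hm, norm_div, norm_neg, Real.norm_eq_abs,
    Real.norm_eq_abs, abs_mul, abs_of_pos (by positivity : (0:ℝ) < m + 1)]
  field_simp

lemma contDiff_besselSeries (μ : ℝ) {n : WithTop ℕ∞} : ContDiff ℝ n (besselSeries μ) := by
  have h := (ofScalars ℝ (besselCoeff μ)).hasFPowerSeriesOnBall
    (by simp [radius_ofScalars_besselCoeff])
  rw [radius_ofScalars_besselCoeff] at h
  exact AnalyticOnNhd.contDiff fun x _ => h.analyticAt_of_mem (by simp)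

lemma besselSeries_zero (μ : ℝ) : besselSeries μ 0 = (Gamma (μ + 1))⁻¹ := by
  simp [besselSeries, besselCoeff]

lemma besselJ_eq_rpow_mul_besselSeries (μ : ℝ) {x : ℝ} (hx : 0 < x) :
    besselJ μ x = (x / 2) ^ μ * besselSeries μ ((x / 2) ^ 2) := by
  have hx2 : 0 < x / 2 := by positivity
  rw [besselJ, besselSeries, ofScalars_sum_eq, ← tsum_mul_left]
  refine tsum_congr fun m => ?_
  rw [smul_eq_mul, ← pow_mul, show 2 * (m : ℝ) + μ = (2 * m : ℕ) + μ by push_cast; ring,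
    rpow_add hx2, rpow_natCast, besselCoeff]
  ring

lemma rpow_mul_besselJ_neg_eq {α ν C t : ℝ} (hν : ν * (2 - α) = α - 1) (hC : 0 < C)
    (ht : 0 < t) :
    t ^ ((1 - α) / 2) * besselJ (-ν) (2 * C * t ^ ((2 - α) / 2)) =
      t ^ (1 - α) * (C ^ (-ν) * besselSeries (-ν) (C ^ 2 * t ^ (2 - α))) := by
  have htq : 0 < t ^ ((2 - α) / 2) := rpow_pos_of_pos ht _
  rw [besselJ_eq_rpow_mul_besselSeries _ (by positivity),
    show 2 * C * t ^ ((2 - α) / 2) / 2 = C * t ^ ((2 - α) / 2) by ring,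
    mul_rpow hC.le htq.le, mul_pow, ← rpow_mul_natCast ht.le, ← rpow_mul ht.le]
  have hexp : (2 - α) / 2 * -ν = (1 - α) / 2 := by linarith
  rw [hexp, show (2 - α) / 2 * ((2 : ℕ) : ℝ) = 2 - α by push_cast; ring]
  have hsplit : t ^ (1 - α) = t ^ ((1 - α) / 2) * t ^ ((1 - α) / 2) := by
    rw [← rpow_add ht]; ring_nf
  rw [hsplit]
  ring

lemma hasDerivAt_rpow_mul_comp_rpow {g : ℝ → ℝ} {p q t : ℝ} (ht : 0 < t)
    (hg : DifferentiableAt ℝ g (t ^ q)) :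
    HasDerivAt (fun s => s ^ p * g (s ^ q))
      (t ^ (p - 1) * (p * g (t ^ q) + q * t ^ q * deriv g (t ^ q))) t := by
  have h := (hasDerivAt_rpow_const (p := p) (Or.inl ht.ne')).mul
    (hg.hasDerivAt.comp t (hasDerivAt_rpow_const (p := q) (Or.inl ht.ne')))
  refine h.congr_deriv ?_
  simp only [Function.comp_apply]
  rw [rpow_sub_one ht.ne', rpow_sub_one ht.ne']
  field_simp

lemma not_integrableOn_Ioo_rpow_mul_of_tendsto {s ℓ L : ℝ} {h : ℝ → ℝ} (hs : s ≤ -1)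
    (hℓ : 0 < ℓ) (hL : 0 < L) (hh : Tendsto h (𝓝[>] 0) (𝓝 L)) :
    ¬ IntegrableOn (fun x => x ^ s * h x) (Ioo 0 ℓ) := by
  intro hint
  obtain ⟨u, hu, hbound⟩ := mem_nhdsGT_iff_exists_Ioo_subset.1
    (hh.eventually (eventually_ge_nhds (half_lt_self hL)))
  have hpow : IntegrableOn (fun x : ℝ => x ^ s) (Ioo 0 (min u ℓ)) := by
    refine ((hint.mono_set (Ioo_subset_Ioo_right (min_le_right _ _))).const_mul (2 / L)).mono'
      (measurable_id.pow_const _).aestronglyMeasurable ?_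
    refine (ae_restrict_iff' measurableSet_Ioo).2 (ae_of_all _ fun x hx => ?_)
    have hx0 : 0 < x ^ s := rpow_pos_of_pos hx.1 _
    have hhx : L / 2 ≤ h x := hbound ⟨hx.1, hx.2.trans_le (min_le_left _ _)⟩
    rw [norm_of_nonneg hx0.le]
    calc x ^ s = 2 / L * (x ^ s * (L / 2)) := by field_simp
      _ ≤ 2 / L * (x ^ s * h x) := by gcongr
  rw [intervalIntegral.integrableOn_Ioo_rpow_iff (lt_min hu hℓ)] at hpow
  linarith

lemma not_integrableOn_sq_rpow_mul_deriv_rpow_mul {α p q ℓ : ℝ} {g : ℝ → ℝ}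
    (hαp : α + 2 * p ≤ 1) (hp : p ≠ 0) (hq : 0 < q) (hℓ : 0 < ℓ) (hg : ContDiff ℝ 1 g)
    (hg0 : g 0 ≠ 0) :
    ¬ IntegrableOn (fun x => (x ^ (α / 2) * deriv (fun t => t ^ p * g (t ^ q)) x) ^ 2)
      (Ioo 0 ℓ) := by
  set F : ℝ → ℝ := fun z => (p * g z + q * z * deriv g z) ^ 2
  have hF : Continuous F := by
    have := contDiff_one_iff_deriv.1 hg
    fun_prop
  have hintegrand : EqOn (fun x => (x ^ (α / 2) * deriv (fun t => t ^ p * g (t ^ q)) x) ^ 2)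
      (fun x => x ^ (α + 2 * p - 2) * F (x ^ q)) (Ioo 0 ℓ) := fun x hx => by
    have hpow : (x ^ (α / 2) * x ^ (p - 1)) ^ 2 = x ^ (α + 2 * p - 2) := by
      rw [← rpow_add hx.1, ← rpow_natCast, ← rpow_mul hx.1.le]
      ring_nf
    simp only [(hasDerivAt_rpow_mul_comp_rpow hx.1 (hg.differentiable one_ne_zero _)).deriv, F,
      ← hpow]
    ring
  have hlim : Tendsto (fun x : ℝ => F (x ^ q)) (𝓝[>] 0) (𝓝 ((p * g 0) ^ 2)) := by
    have hpow : Tendsto (fun x : ℝ => x ^ q) (𝓝[>] 0) (𝓝 0) := by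
      simpa [zero_rpow hq.ne'] using
        (continuousAt_rpow_const 0 _ (Or.inr hq.le)).tendsto.mono_left nhdsWithin_le_nhds
    simpa [F, Function.comp_def] using (hF.tendsto 0).comp hpow
  rw [integrableOn_congr_fun hintegrand measurableSet_Ioo]
  exact not_integrableOn_Ioo_rpow_mul_of_tendsto (by linarith) hℓ (by positivity) hlim

theorem second_solution_not_in_H1alpha (α ℓ lam ν : ℝ)
    (hα : α ∈ Set.Ico (1:ℝ) 2) (hℓ : 0 < ℓ) (hlam : 0 < lam)
    (hν : ν = (α - 1) / (2 - α)) (hνnat : ∀ n : ℕ, ν ≠ n) :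
    ¬ MeasureTheory.IntegrableOn
        (fun x : ℝ =>
          (x ^ (α / 2) *
            deriv (fun t : ℝ =>
              t ^ ((1 - α) / 2) *
                besselJ (-ν) (2 / (2 - α) * Real.sqrt lam * t ^ ((2 - α) / 2))) x) ^ 2)
        (Set.Ioo 0 ℓ) := by
  obtain ⟨hα1, hα2⟩ := hα
  have hνα : ν * (2 - α) = α - 1 := by rw [hν]; field_simp [(sub_pos.2 hα2).ne']
  have hp : 1 - α ≠ 0 := fun h => hνnat 0 (by rw [hν]; simp [show α = 1 by linarith])
  set C := √lam / (2 - α)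
  have hC : 0 < C := div_pos (sqrt_pos.2 hlam) (sub_pos.2 hα2)
  set g : ℝ → ℝ := fun z => C ^ (-ν) * besselSeries (-ν) (C ^ 2 * z)
  have hg : ContDiff ℝ 1 g :=
    contDiff_const.mul ((contDiff_besselSeries _).comp (contDiff_const.mul contDiff_id))
  have hg0 : g 0 ≠ 0 := by
    simp only [g, mul_zero, besselSeries_zero]
    refine mul_ne_zero (rpow_pos_of_pos hC _).ne' (inv_ne_zero (Gamma_ne_zero fun m hm => ?_))
    exact hνnat (m + 1) (by push_cast; linarith)
  have hΦ : EqOn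
      (fun t => t ^ ((1 - α) / 2) * besselJ (-ν) (2 / (2 - α) * √lam * t ^ ((2 - α) / 2)))
      (fun t => t ^ (1 - α) * g (t ^ (2 - α))) (Ioi 0) := fun t ht => by
    rw [show 2 / (2 - α) * √lam = 2 * C by ring]
    exact rpow_mul_besselJ_neg_eq hνα hC ht
  rw [integrableOn_congr_fun (fun x hx => by
    rw [(hΦ.eventuallyEq_of_mem (Ioi_mem_nhds hx.1)).deriv_eq]) measurableSet_Ioo]
  exact not_integrableOn_sq_rpow_mul_deriv_rpow_mul (by linarith) hp (by linarith) hℓ hg hg0
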